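/- The map G : ℝ^(3×3)_sym → ℝ^(3×3)_sym defined on symmetric 3×3 matrices by G(T) = |dev(T)|^{p-1} dev(T), where dev(T) = T - (tr T / 3)·I and |·| is the Frobenius norm, is monotone: (G(S) - G(T)) · (S - T) ≥ 0 for all symmetric matrices S, T, where · denotes the Frobenius inner product. Here p > 1 is a fixed real number and we use the convention |0|^{p-1}·0 = 0. -/

import Mathlib

/-! For `a = ‖x‖`, `b = ‖y‖` and `q ≥ 0`, Cauchy–Schwarz bounds
`⟪‖x‖^q • x - ‖y‖^q • y, x - y⟫` from below by `(a - b) (a^q a - b^q b)`, which is nonnegative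
because `t ↦ t^q t` is monotone on `[0, ∞)`. Hence `x ↦ ‖x‖^q • x` is monotone on every real
inner product space. The matrices with the Frobenius inner product form one, and `G(S) - G(T)` is
traceless, hence orthogonal to the spherical part of `S - T`; so only `dev S - dev T` contributes. -/

open Matrix BigOperators

noncomputable def frobInner (A B : Matrix (Fin 3) (Fin 3) ℝ) : ℝ :=
  ∑ i : Fin 3, ∑ j : Fin 3, A i j * B i j

noncomputable def frobNorm (A : Matrix (Fin 3) (Fin 3) ℝ) : ℝ :=
  Real.sqrt (frobInner A A)

noncomputable def devM (T : Matrix (Fin 3) (Fin 3) ℝ) : Matrix (Fin 3) (Fin 3) ℝ :=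
  T - (Matrix.trace T / 3) • (1 : Matrix (Fin 3) (Fin 3) ℝ)

noncomputable def NortonG (p : ℝ) (T : Matrix (Fin 3) (Fin 3) ℝ) : Matrix (Fin 3) (Fin 3) ℝ :=
  (frobNorm (devM T)) ^ (p - 1) • devM T

open scoped InnerProductSpace

theorem inner_rpow_norm_smul_sub_nonneg {E : Type*} [NormedAddCommGroup E]
    [InnerProductSpace ℝ E] {q : ℝ} (hq : 0 ≤ q) (x y : E) :
    0 ≤ ⟪‖x‖ ^ q • x - ‖y‖ ^ q • y, x - y⟫_ℝ := by
  set a := ‖x‖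
  set b := ‖y‖
  have ha : 0 ≤ a := norm_nonneg x
  have hb : 0 ≤ b := norm_nonneg y
  have hpow : 0 ≤ (a - b) * (a ^ q * a - b ^ q * b) := by
    rcases le_total a b with hab | hab
    · exact mul_nonneg_of_nonpos_of_nonpos (sub_nonpos.2 hab)
        (sub_nonpos.2 (mul_le_mul (Real.rpow_le_rpow ha hab hq) hab ha (by positivity)))
    · exact mul_nonneg (sub_nonneg.2 hab)
        (sub_nonneg.2 (mul_le_mul (Real.rpow_le_rpow hb hab hq) hab hb (by positivity)))
  have hcs : ⟪x, y⟫_ℝ ≤ a * b := real_inner_le_norm x y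
  calc 0 ≤ (a - b) * (a ^ q * a - b ^ q * b) := hpow
    _ = a ^ q * a ^ 2 - (a ^ q + b ^ q) * (a * b) + b ^ q * b ^ 2 := by ring
    _ ≤ a ^ q * a ^ 2 - (a ^ q + b ^ q) * ⟪x, y⟫_ℝ + b ^ q * b ^ 2 := by
      gcongr
    _ = ⟪‖x‖ ^ q • x - ‖y‖ ^ q • y, x - y⟫_ℝ := by
      simp only [inner_sub_left, inner_sub_right, real_inner_smul_left,
        real_inner_self_eq_norm_sq, real_inner_comm x y]
      ring

noncomputable def frobEuclid : Matrix (Fin 3) (Fin 3) ℝ ≃ₗ[ℝ] EuclideanSpace ℝ (Fin 3 × Fin 3) :=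
  (LinearEquiv.curry ℝ ℝ (Fin 3) (Fin 3)).symm ≪≫ₗ (WithLp.linearEquiv 2 ℝ _).symm

@[simp]
theorem frobEuclid_apply (A : Matrix (Fin 3) (Fin 3) ℝ) (i j : Fin 3) :
    frobEuclid A (i, j) = A i j :=
  rfl

theorem inner_frobEuclid (A B : Matrix (Fin 3) (Fin 3) ℝ) :
    ⟪frobEuclid A, frobEuclid B⟫_ℝ = frobInner A B := by
  simp [frobInner, PiLp.inner_apply, Fintype.sum_prod_type, mul_comm]

theorem norm_frobEuclid (A : Matrix (Fin 3) (Fin 3) ℝ) : ‖frobEuclid A‖ = frobNorm A := by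
  rw [frobNorm, ← inner_frobEuclid, real_inner_self_eq_norm_sq, Real.sqrt_sq (norm_nonneg _)]

theorem frobInner_smul_one (A : Matrix (Fin 3) (Fin 3) ℝ) (c : ℝ) :
    frobInner A (c • 1) = c * A.trace := by
  simp [frobInner, Matrix.one_apply, Matrix.trace, Finset.mul_sum, mul_comm]

theorem trace_devM (T : Matrix (Fin 3) (Fin 3) ℝ) : (devM T).trace = 0 := by
  simp [devM]

theorem trace_nortonG (p : ℝ) (T : Matrix (Fin 3) (Fin 3) ℝ) : (NortonG p T).trace = 0 := by
  simp [NortonG, trace_devM]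

theorem sub_eq_devM_sub_add (S T : Matrix (Fin 3) (Fin 3) ℝ) :
    S - T = (devM S - devM T) + ((S.trace - T.trace) / 3) • 1 := by
  simp only [devM, sub_div, sub_smul]
  abel

theorem frobInner_nortonG_sub (p : ℝ) (S T : Matrix (Fin 3) (Fin 3) ℝ) :
    frobInner (NortonG p S - NortonG p T) (S - T)
      = frobInner (NortonG p S - NortonG p T) (devM S - devM T) := by
  rw [sub_eq_devM_sub_add S T, ← inner_frobEuclid, map_add, inner_add_right, inner_frobEuclid,
    inner_frobEuclid, frobInner_smul_one, trace_sub, trace_nortonG, trace_nortonG]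
  ring

theorem nortonG_monotone_general (p : ℝ) (hp : 1 < p)
    (S T : Matrix (Fin 3) (Fin 3) ℝ) :
    0 ≤ frobInner (NortonG p S - NortonG p T) (S - T) := by
  rw [frobInner_nortonG_sub, ← inner_frobEuclid]
  simp only [NortonG, map_sub, map_smul, ← norm_frobEuclid]
  exact inner_rpow_norm_smul_sub_nonneg (by linarith) _ _

theorem nortonG_monotone (p : ℝ) (hp : 1 < p)
    (S T : Matrix (Fin 3) (Fin 3) ℝ) (hS : Sᵀ = S) (hT : Tᵀ = T) :
    0 ≤ frobInner (NortonG p S - NortonG p T) (S - T) :=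
  nortonG_monotone_general p hp S T
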